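/- Let G be a finite digraph on a finite vertex set V, let 𝓛 ⊆ V be a feedback vertex set of G, let g : 𝓛 → ℝ, and let E be the unique function on arcs satisfying E(u, v) = g(v) for v ∈ 𝓛 and E(u, v) = Σ_{w : (v, w) an arc} E(v, w) for v ∉ 𝓛. Then for every arc (u, v) of G: E(u, v) = Σ g(x_m), where the sum ranges over all finite sequences (x_0, x_1, …, x_m) of vertices with m ≥ 0, x_0 = v, (x_i, x_{i+1}) an arc of G for each 0 ≤ i < m, x_0, …, x_{m−1} ∉ 𝓛, and x_m ∈ 𝓛. (In particular the sum is finite, since the subgraph induced on V \ 𝓛 is acyclic, and E(u, v) does not depend on u.) -/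

import Mathlib

/-!
A digraph on a finite vertex set `V` is given by its arc relation `A : V → V → Prop`,
arcs being ordered pairs of distinct vertices (irreflexivity hypothesis `hirr`).
A directed cycle is a list `(u_0, …, u_k)` with `k ≥ 1`, `u_0 = u_k`, all other
vertices pairwise distinct, and `(u_i, u_{i+1})` an arc for each `0 ≤ i < k`.
-/

/-- `l` is a directed cycle in the digraph with arc relation `A`. -/
def IsFwdCycle {V : Type*} (A : V → V → Prop) (l : List V) : Prop :=
  2 ≤ l.length ∧ l.head? = l.getLast? ∧ l.dropLast.Nodup ∧ l.Chain' A

/-- `E` satisfies the escrow-premium recurrence determined by the leader set `𝓛` and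
the leader premiums `g`: on each arc `(u, v)`, `E(u, v) = g(v)` if `v ∈ 𝓛`, and
`E(u, v) = Σ_{w : (v, w) an arc} E(v, w)` if `v ∉ 𝓛`. -/
def SatisfiesERec {V : Type*} [Fintype V] (A : V → V → Prop) [DecidableRel A]
    (𝓛 : Set V) (g : V → ℝ) (E : V → V → ℝ) : Prop :=
  ∀ u v, A u v →
    (v ∈ 𝓛 → E u v = g v) ∧
    (v ∉ 𝓛 → E u v = ∑ w ∈ Finset.univ.filter (fun w => A v w), E v w)

/-!
Since `𝓛` meets every directed cycle, a walk avoiding `𝓛` repeats no vertex: a repetition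
`a … a` with no repetition strictly inside it is a cycle avoiding `𝓛`. So walks avoiding
`𝓛` have at most `|V|` vertices, the relation "`w` is an out-neighbour of the non-leader `v`"
is well-founded, and by well-founded induction the recurrence determines `E u v` as a function
`F v`. The path sum satisfies the same recurrence, because a path from a non-leader `v` is `v`
followed by a path from an out-neighbour of `v`, and the only path from a leader `v` is `[v]`.
-/

section

variable {V : Type*}

theorem List.exists_eq_append_cons_append_cons_of_not_nodup {l : List V} (h : ¬ l.Nodup) :
    ∃ (a : V) (p q r : List V), l = p ++ a :: q ++ a :: r := by
  induction l with
  | nil => simp at h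
  | cons b t ih =>
    by_cases hb : b ∈ t
    · obtain ⟨q, r, rfl⟩ := List.append_of_mem hb
      exact ⟨b, [], q, r, rfl⟩
    · obtain ⟨a, p, q, r, rfl⟩ := ih fun ht => h (List.nodup_cons.mpr ⟨hb, ht⟩)
      exact ⟨a, b :: p, q, r, rfl⟩

def IsFeedbackVertexSet (A : V → V → Prop) (𝓛 : Set V) : Prop :=
  ∀ l : List V, IsFwdCycle A l → ∃ x ∈ l, x ∈ 𝓛

def leaderPaths (A : V → V → Prop) (𝓛 : Set V) (v : V) : Set (List V) :=
  {l : List V | l.head? = some v ∧ l.IsChain A ∧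
    (∀ x ∈ l.dropLast, x ∉ 𝓛) ∧ (∀ x, l.getLast? = some x → x ∈ 𝓛)}

variable {A : V → V → Prop} {𝓛 : Set V}

namespace IsFeedbackVertexSet

theorem nodup_of_isChain (h𝓛 : IsFeedbackVertexSet A 𝓛) {l : List V} (hl : l.IsChain A)
    (hl𝓛 : ∀ x ∈ l, x ∉ 𝓛) : l.Nodup := by
  by_contra hnd
  obtain ⟨a, p, q, r, hlpqr⟩ := List.exists_eq_append_cons_append_cons_of_not_nodup hnd
  have hcycle : (a :: q) ++ [a] <:+: l := ⟨p, r, by simp [hlpqr]⟩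
  have hq : (a :: q).Nodup :=
    nodup_of_isChain h𝓛 (hl.infix ((List.prefix_append _ _).isInfix.trans hcycle))
      fun x hx => hl𝓛 x (hcycle.subset ((List.prefix_append _ _).subset hx))
  obtain ⟨x, hx, hx𝓛⟩ := h𝓛 _
    ⟨by simp, by rw [List.getLast?_concat]; rfl, by rwa [List.dropLast_concat], hl.infix hcycle⟩
  exact hl𝓛 x (hcycle.subset hx) hx𝓛
termination_by l.length
decreasing_by simp [hlpqr]; omega

theorem wellFounded [Finite V] (h𝓛 : IsFeedbackVertexSet A 𝓛) :
    WellFounded (fun w v => A v w ∧ v ∉ 𝓛) := by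
  cases nonempty_fintype V
  refine wellFounded_iff_isEmpty_descending_chain.mpr ⟨fun ⟨f, hf⟩ => ?_⟩
  have hnodup := h𝓛.nodup_of_isChain (l := (List.range (Fintype.card V + 1)).map f)
    ((List.isChain_map f).mpr ((List.isChain_range _ _).mpr fun m _ => (hf m).1))
    (by simpa using fun m _ => (hf m).2)
  simpa using hnodup.length_le_card

theorem leaderPaths_finite [Finite V] (h𝓛 : IsFeedbackVertexSet A 𝓛) (v : V) :
    (leaderPaths A 𝓛 v).Finite := by
  cases nonempty_fintype V
  refine (List.finite_length_le V (Fintype.card V + 1)).subset fun l ⟨_, hl, hl𝓛, _⟩ => ?_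
  have := (h𝓛.nodup_of_isChain (hl.prefix l.dropLast_prefix) hl𝓛).length_le_card
  simp only [Set.mem_ofPred_eq, List.length_dropLast] at this ⊢
  omega

end IsFeedbackVertexSet

section leaderPaths

variable {v w : V} {l t : List V}

theorem eq_cons_of_mem_leaderPaths (hl : l ∈ leaderPaths A 𝓛 v) : ∃ t, l = v :: t :=
  List.head?_eq_some_iff.mp hl.1

theorem cons_cons_mem_leaderPaths_iff :
    v :: w :: t ∈ leaderPaths A 𝓛 v ↔ A v w ∧ v ∉ 𝓛 ∧ w :: t ∈ leaderPaths A 𝓛 w := by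
  simp only [leaderPaths, Set.mem_ofPred_eq, List.head?_cons, List.isChain_cons_cons,
    List.dropLast_cons_cons, List.mem_cons, List.getLast?_cons_cons]
  grind

theorem leaderPaths_of_mem (hv : v ∈ 𝓛) : leaderPaths A 𝓛 v = {[v]} := by
  ext l
  constructor
  · intro hl
    obtain ⟨t, rfl⟩ := eq_cons_of_mem_leaderPaths hl
    cases t with
    | nil => rfl
    | cons w t => exact absurd hv (cons_cons_mem_leaderPaths_iff.mp hl).2.1
  · rintro rfl
    exact ⟨rfl, .singleton v, by simp, by simpa⟩

theorem leaderPaths_of_not_mem (hv : v ∉ 𝓛) :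
    leaderPaths A 𝓛 v = ⋃ w ∈ {w | A v w}, (v :: ·) '' leaderPaths A 𝓛 w := by
  ext l
  simp only [Set.mem_iUnion, Set.mem_image, Set.mem_ofPred_eq]
  constructor
  · intro hl
    obtain ⟨t, rfl⟩ := eq_cons_of_mem_leaderPaths hl
    cases t with
    | nil => exact absurd (hl.2.2.2 v rfl) hv
    | cons w t =>
      obtain ⟨hvw, -, hwt⟩ := cons_cons_mem_leaderPaths_iff.mp hl
      exact ⟨w, hvw, w :: t, hwt, rfl⟩
  · rintro ⟨w, hvw, l, hl, rfl⟩
    obtain ⟨t, rfl⟩ := eq_cons_of_mem_leaderPaths hl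
    exact cons_cons_mem_leaderPaths_iff.mpr ⟨hvw, hv, hl⟩

variable {M : Type*} [AddCommMonoid M]

noncomputable def leaderPathSum (A : V → V → Prop) (𝓛 : Set V) (g : V → M) (v : V) : M :=
  ∑ᶠ l ∈ leaderPaths A 𝓛 v, (l.getLast?.map g).getD 0

theorem leaderPathSum_of_mem (g : V → M) (hv : v ∈ 𝓛) : leaderPathSum A 𝓛 g v = g v := by
  rw [leaderPathSum, leaderPaths_of_mem hv, finsum_mem_singleton]
  rfl

theorem leaderPathSum_of_not_mem [Fintype V] [DecidableRel A] (g : V → M)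
    (hfin : ∀ w, (leaderPaths A 𝓛 w).Finite) (hv : v ∉ 𝓛) :
    leaderPathSum A 𝓛 g v =
      ∑ w ∈ Finset.univ.filter (fun w => A v w), leaderPathSum A 𝓛 g w := by
  have hdisj : {w | A v w}.PairwiseDisjoint fun w => (v :: ·) '' leaderPaths A 𝓛 w := by
    rintro w₁ - w₂ - hne
    refine Set.disjoint_left.mpr ?_
    rintro _ ⟨l₁, hl₁, rfl⟩ ⟨l₂, hl₂, heq⟩
    obtain ⟨t₁, rfl⟩ := eq_cons_of_mem_leaderPaths hl₁
    obtain ⟨t₂, rfl⟩ := eq_cons_of_mem_leaderPaths hl₂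
    simp only [List.cons.injEq] at heq
    exact hne heq.2.1.symm
  rw [leaderPathSum, leaderPaths_of_not_mem hv,
    finsum_mem_biUnion hdisj (Set.toFinite _) fun w _ => (hfin w).image _,
    ← finsum_mem_coe_finset, Finset.coe_filter]
  refine finsum_mem_congr (by simp) fun w _ => ?_
  rw [finsum_mem_image List.cons_injective.injOn]
  refine finsum_mem_congr rfl fun l hl => ?_
  obtain ⟨t, rfl⟩ := eq_cons_of_mem_leaderPaths hl
  rw [List.getLast?_cons_cons]

end leaderPaths

theorem SatisfiesERec.eq_of_wellFounded [Fintype V] [DecidableRel A] {g : V → ℝ}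
    {E : V → V → ℝ} (hE : SatisfiesERec A 𝓛 g E) (hwf : WellFounded (fun w v => A v w ∧ v ∉ 𝓛))
    {F : V → ℝ} (hF𝓛 : ∀ v ∈ 𝓛, F v = g v)
    (hF : ∀ v ∉ 𝓛, F v = ∑ w ∈ Finset.univ.filter (fun w => A v w), F w)
    {u v : V} (huv : A u v) : E u v = F v := by
  induction v using hwf.induction generalizing u with
  | _ v ih =>
    by_cases hv : v ∈ 𝓛
    · rw [(hE u v huv).1 hv, hF𝓛 v hv]
    · rw [(hE u v huv).2 hv, hF v hv]
      refine Finset.sum_congr rfl fun w hw => ?_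
      have hvw : A v w := (Finset.mem_filter.mp hw).2
      exact ih w ⟨hvw, hv⟩ hvw

end

theorem escrow_premium_eq_sum_over_paths_to_leaders_general {V : Type*} [Fintype V]
    (A : V → V → Prop) [DecidableRel A]
    (𝓛 : Set V) (hFVS : ∀ l : List V, IsFwdCycle A l → ∃ x ∈ l, x ∈ 𝓛)
    (g : V → ℝ) (E : V → V → ℝ) (hE : SatisfiesERec A 𝓛 g E)
    (u v : V) (huv : A u v) :
    E u v = ∑ᶠ l ∈ {l : List V | l.head? = some v ∧ l.Chain' A ∧
        (∀ x ∈ l.dropLast, x ∉ 𝓛) ∧ (∀ x, l.getLast? = some x → x ∈ 𝓛)},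
      ((l.getLast?.map g).getD 0) :=
  hE.eq_of_wellFounded (IsFeedbackVertexSet.wellFounded hFVS)
    (fun _ hv => leaderPathSum_of_mem g hv)
    (fun _ hv => leaderPathSum_of_not_mem g (IsFeedbackVertexSet.leaderPaths_finite hFVS) hv) huv

/-- Let `𝓛` be a feedback vertex set of the finite digraph `G` and let
`E` satisfy the escrow-premium recurrence for leader premiums `g`. Then for every arc
`(u, v)`, `E(u, v) = Σ g(x_m)`, the sum ranging over all finite sequences
`(x_0, …, x_m)` of vertices (modelled as nonempty lists `l`, summed via `∑ᶠ`; the sum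
has finite support since the subgraph induced on `V \ 𝓛` is acyclic) with `m ≥ 0`,
`x_0 = v`, `(x_i, x_{i+1})` an arc for each `0 ≤ i < m`, `x_0, …, x_{m−1} ∉ 𝓛`, and
`x_m ∈ 𝓛`; each such sequence contributes `g` of its last vertex `x_m`. -/
theorem escrow_premium_eq_sum_over_paths_to_leaders {V : Type*} [Fintype V]
    (A : V → V → Prop) [DecidableRel A] (hirr : ∀ u, ¬ A u u)
    (𝓛 : Set V) (hFVS : ∀ l : List V, IsFwdCycle A l → ∃ x ∈ l, x ∈ 𝓛)
    (g : V → ℝ) (E : V → V → ℝ) (hE : SatisfiesERec A 𝓛 g E)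
    (u v : V) (huv : A u v) :
    E u v = ∑ᶠ l ∈ {l : List V | l.head? = some v ∧ l.Chain' A ∧
        (∀ x ∈ l.dropLast, x ∉ 𝓛) ∧ (∀ x, l.getLast? = some x → x ∈ 𝓛)},
      ((l.getLast?.map g).getD 0) :=
  escrow_premium_eq_sum_over_paths_to_leaders_general A 𝓛 hFVS g E hE u v huv
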